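/- arXiv:2506.02525 — 3 statements merged into one kernel-verified Lean document; each statement's English description precedes it below -/
import Mathlib

section
/- If two update schedules s1 and s2 on the same digraph G induce the same labeling lab_{s1} = lab_{s2} on all arcs, then for every Boolean network with interaction digraph G (i.e., each local function f_i depends only on the in-neighbors of i in G), the block-sequential dynamics under s1 equals the block-sequential dynamics under s2. -/
/-- An update schedule: the values of `s` form an initial segment of ℕ
(blocks are the fibers, updated in increasing order of value). -/
def IsSchedule {V : Type*} (s : V → ℕ) : Prop :=
  ∀ i t, t < s i → ∃ j, s j = t

/-- The block-sequential dynamics of the Boolean network `f` under the schedule `s`: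
the blocks (fibers of `s`) are updated one after the other in increasing order of
their `s`-value, the nodes inside a block simultaneously. -/
def blockSeq {n : ℕ} (f : Fin n → (Fin n → Bool) → Bool) (s : Fin n → ℕ)
    (x : Fin n → Bool) : Fin n → Bool :=
  (List.range (Finset.univ.sup s + 1)).foldl
    (fun y t => fun i => if s i = t then f i y else y i) x

/-- The state of node `i` after its update, defined by recursion on `s i`. -/
def finalState {n : ℕ} (f : Fin n → (Fin n → Bool) → Bool) (s : Fin n → ℕ)
    (x : Fin n → Bool) : Fin n → Bool
  | i => f i (fun j => if h : s j < s i then finalState f s x j else x j)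
termination_by i => s i
decreasing_by exact h

lemma finalState_eq {n : ℕ} (f : Fin n → (Fin n → Bool) → Bool) (s : Fin n → ℕ)
    (x : Fin n → Bool) (i : Fin n) :
    finalState f s x i = f i (fun j => if s j < s i then finalState f s x j else x j) := by
  rw [finalState]
  exact congrArg _ (funext fun j => by by_cases h : s j < s i <;> simp [h])

lemma foldl_range_eq {n : ℕ} (f : Fin n → (Fin n → Bool) → Bool) (s : Fin n → ℕ)
    (x : Fin n → Bool) (T : ℕ) : ∀ (i : Fin n),
    ((List.range T).foldl (fun y t => fun i => if s i = t then f i y else y i) x) i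
      = if s i < T then finalState f s x i else x i := by
  induction T with
  | zero => simp
  | succ T ih =>
    intro i
    rw [List.range_succ, List.foldl_append]
    simp only [List.foldl_cons, List.foldl_nil]
    by_cases h : s i = T
    · simp only [h, if_true]
      rw [finalState_eq]
      have : (fun j => if s j < s i then finalState f s x j else x j)
          = (List.range T).foldl (fun y t => fun i => if s i = t then f i y else y i) x := by
        funext j
        rw [ih j, h]
      rw [this]
      simp [Nat.lt_succ_iff]
    · simp only [h, if_false]
      rw [ih i]
      have hiff : s i < T + 1 ↔ s i < T := by omega
      simp only [hiff]

lemma blockSeq_eq_finalState {n : ℕ} (f : Fin n → (Fin n → Bool) → Bool) (s : Fin n → ℕ)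
    (x : Fin n → Bool) : blockSeq f s x = finalState f s x := by
  funext i
  rw [blockSeq, foldl_range_eq]
  have : s i ≤ Finset.univ.sup s := Finset.le_sup (Finset.mem_univ i)
  simp [Nat.lt_succ_of_le this]

/-- If two update schedules on the same digraph `G` induce the same labeling on all
arcs, then for every Boolean network with interaction digraph `G` the
block-sequential dynamics under the two schedules coincide. -/
theorem same_labeling_same_dynamics
    {n : ℕ} (A : Fin n → Fin n → Prop) (f : Fin n → (Fin n → Bool) → Bool)
    (hdep : ∀ i x y, (∀ j, A j i → x j = y j) → f i x = f i y)
    (s1 s2 : Fin n → ℕ) (hs1 : IsSchedule s1) (hs2 : IsSchedule s2)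
    (hlab : ∀ i j, A i j → (s1 j ≤ s1 i ↔ s2 j ≤ s2 i)) :
    blockSeq f s1 = blockSeq f s2 := by
  funext x
  rw [blockSeq_eq_finalState, blockSeq_eq_finalState]
  have key : ∀ k : ℕ, ∀ i : Fin n, s1 i = k → finalState f s1 x i = finalState f s2 x i := by
    intro k
    induction k using Nat.strong_induction_on with
    | _ k ih =>
      intro i hk
      rw [finalState_eq, finalState_eq]
      apply hdep
      intro j hji
      have harc := hlab j i hji
      have hlt : s1 j < s1 i ↔ s2 j < s2 i := by
        constructor <;> intro h <;> by_contra hc <;> omega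
      by_cases h : s1 j < s1 i
      · rw [if_pos h, if_pos (hlt.mp h)]
        exact ih (s1 j) (hk ▸ h) j rfl
      · rw [if_neg h, if_neg (fun hc => h (hlt.mpr hc))]
  funext i
  exact key (s1 i) i rfl
end

section
/- The 9-node reduced NSCLC Boolean network updated synchronously has exactly three fixed points: (miR145, Sp1, MALAT1, BMI1, KLF4, p53, p53A, p53K, E2F1) equal to (0,1,1,1,1,0,0,0,1), (1,0,0,0,0,1,0,1,0), and (1,0,0,0,0,1,1,0,0). -/
/-- States: (miR145, Sp1, MALAT1, BMI1, KLF4, p53, p53A, p53K, E2F1). -/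
abbrev B9 := Bool × Bool × Bool × Bool × Bool × Bool × Bool × Bool × Bool

/-- Synchronous map of the 9-node reduced NSCLC Boolean network. -/
def F9 : B9 → B9 :=
  fun (miR145, sp1, malat1, bmi1, klf4, p53, p53A, p53K, e2f1) =>
    (p53 && !malat1 && !bmi1,
     bmi1 || !miR145,
     sp1,
     e2f1,
     !miR145 || (e2f1 && p53),
     !klf4 || !malat1,
     !p53K && p53,
     !p53A && p53,
     malat1)

set_option maxHeartbeats 1000000 in
set_option synthInstance.maxHeartbeats 1000000 in
set_option synthInstance.maxSize 5000 in
/-- The 9-node reduced NSCLC network has exactly three fixed points. -/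
theorem nine_node_fixed_points :
    ∀ x : B9, F9 x = x ↔
      x = (false, true, true, true, true, false, false, false, true) ∨
      x = (true, false, false, false, false, true, false, true, false) ∨
      x = (true, false, false, false, false, true, true, false, false) := by
  intro x
  obtain ⟨a,b,c,d,e,f,g,h,i⟩ := x
  revert a b c d e f g h i
  decide
end

section
/- In the 9-node reduced NSCLC Boolean network under synchronous update, exactly 504 of the 512 states converge to the fixed point (0,1,1,1,1,0,0,0,1) (the drug-resistance state); of the remaining 8 states, 2 converge to each of the other two fixed points and 4 converge to the 2-cycle. -/
set_option synthInstance.maxSize 5000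
set_option maxHeartbeats 4000000
set_option maxRecDepth 10000


instance : DecidableEq B9 := inferInstance

lemma F9_periodic : ∀ x : B9, F9^[2] (F9^[9] x) = F9^[9] x := by decide

lemma two_periodic_iter {w : B9} (hw : F9^[2] w = w) :
    ∀ m, F9^[m] w = w ∨ F9^[m] w = F9 w := by
  intro m
  induction m with
  | zero => exact Or.inl rfl
  | succ n ih =>
    rw [Function.iterate_succ_apply']
    rcases ih with h | h
    · rw [h]; exact Or.inr rfl
    · rw [h]
      exact Or.inl hw

lemma even_iter {w : B9} (hw : F9^[2] w = w) : ∀ n, F9^[n + n] w = w := by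
  intro n
  induction n with
  | zero => rfl
  | succ m ih =>
    have : m + 1 + (m + 1) = 2 + (m + m) := by omega
    rw [this, Function.iterate_add_apply, ih, hw]

lemma basin_fixed {p : B9} (hp : F9 p = p) (x : B9) :
    (∃ k, F9^[k] x = p) ↔ F9^[9] x = p := by
  constructor
  · rintro ⟨k, hk⟩
    rcases le_or_gt k 9 with h | h
    · have : F9^[9 - k + k] x = p := by
        rw [Function.iterate_add_apply, hk, Function.iterate_fixed hp]
      rwa [Nat.sub_add_cancel h] at this
    · set y := F9^[9] x with hy
      have h2 : F9^[2] y = y := F9_periodic x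
      have hm : F9^[k - 9] y = p := by
        rw [hy, ← Function.iterate_add_apply, Nat.sub_add_cancel h.le, hk]
      calc y = F9^[(k - 9) + (k - 9)] y := (even_iter h2 _).symm
        _ = F9^[k - 9] (F9^[k - 9] y) := Function.iterate_add_apply ..
        _ = p := by rw [hm, Function.iterate_fixed hp]
  · intro h; exact ⟨9, h⟩

lemma basin_cycle {u v : B9} (hu : F9 u = v) (hv : F9 v = u) (x : B9) :
    (∃ k, F9^[k] x = u ∨ F9^[k] x = v) ↔ (F9^[9] x = u ∨ F9^[9] x = v) := by
  have h2u : F9^[2] u = u := by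
    show F9 (F9 u) = u; rw [hu, hv]
  have h2v : F9^[2] v = v := by
    show F9 (F9 v) = v; rw [hv, hu]
  have key : ∀ m w, (w = u ∨ w = v) → (F9^[m] w = u ∨ F9^[m] w = v) := by
    rintro m w (rfl | rfl)
    · rcases two_periodic_iter h2u m with h | h
      · exact Or.inl h
      · rw [hu] at h; exact Or.inr h
    · rcases two_periodic_iter h2v m with h | h
      · exact Or.inr h
      · rw [hv] at h; exact Or.inl h
  constructor
  · rintro ⟨k, hk⟩
    rcases le_or_gt k 9 with h | h
    · have := key (9 - k) _ hk
      rwa [← Function.iterate_add_apply, Nat.sub_add_cancel h] at this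
    · set y := F9^[9] x with hy
      have h2 : F9^[2] y = y := F9_periodic x
      have hm : F9^[k - 9] y = u ∨ F9^[k - 9] y = v := by
        rw [hy, ← Function.iterate_add_apply, Nat.sub_add_cancel h.le]; exact hk
      have : y = F9^[k - 9] (F9^[k - 9] y) := by
        rw [← Function.iterate_add_apply]; exact (even_iter h2 _).symm
      rw [this]; exact key _ _ hm
  · intro h; exact ⟨9, h⟩

/-- Basin sizes of the synchronous dynamics of the 9-node network: 504 of the 512
states converge to the drug-resistance fixed point `(0,1,1,1,1,0,0,0,1)`, 2 to each
of the two other fixed points, and 4 to the 2-cycle `{u, v}`. -/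
theorem nine_node_basins :
    Nat.card {x : B9 // ∃ k, F9^[k] x =
        (false, true, true, true, true, false, false, false, true)} = 504 ∧
    Nat.card {x : B9 // ∃ k, F9^[k] x =
        (true, false, false, false, false, true, false, true, false)} = 2 ∧
    Nat.card {x : B9 // ∃ k, F9^[k] x =
        (true, false, false, false, false, true, true, false, false)} = 2 ∧
    Nat.card {x : B9 // ∃ k,
        F9^[k] x = (true, false, false, false, false, true, false, false, false) ∨
        F9^[k] x = (true, false, false, false, false, true, true, true, false)} = 4 := by
  refine ⟨?_, ?_, ?_, ?_⟩
  · rw [Nat.card_congr (Equiv.subtypeEquivRight (basin_fixed (by decide)))]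
    rw [Nat.card_eq_fintype_card]
    decide
  · rw [Nat.card_congr (Equiv.subtypeEquivRight (basin_fixed (by decide)))]
    rw [Nat.card_eq_fintype_card]
    decide
  · rw [Nat.card_congr (Equiv.subtypeEquivRight (basin_fixed (by decide)))]
    rw [Nat.card_eq_fintype_card]
    decide
  · rw [Nat.card_congr (Equiv.subtypeEquivRight (basin_cycle (by decide) (by decide)))]
    rw [Nat.card_eq_fintype_card]
    decide
end
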